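/- arXiv:2506.10405 — 2 statements merged into one kernel-verified Lean document; each statement's English description precedes it below -/
import Mathlib

section
/- For all states s, s' ∈ S and all integers 0 ≤ a < b ≤ h, the optimal switching cost satisfies the dynamic-programming recurrence κ(s, a, s', b) = min over all s'' ∈ S with T(s, s'') ≠ ∞ and T(s, s'') ≤ b − a of (Σ_{i = a}^{a + T(s, s'') − 1} c i · P(s, s'')) + κ(s'', a + T(s, s''), s', b), where the minimum over the empty set is ⊤. -/
namespace TOU

open Classical in
/-- The infimum of a set of rationals, as an element of `WithTop ℚ`:
the least element of the set when one exists, and `⊤` otherwise.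
(All the sets of achievable total energy costs considered below are finite,
so this is the infimum, and it is `⊤` exactly when the set is empty.) -/
noncomputable def infQ (A : Set ℚ) : WithTop ℚ :=
  if h : ∃ x ∈ A, ∀ y ∈ A, x ≤ y then ((h.choose : ℚ) : WithTop ℚ) else ⊤

open Classical in
/-- The analogous infimum operation for subsets of `WithTop ℚ`. -/
noncomputable def infW (A : Set (WithTop ℚ)) : WithTop ℚ :=
  if h : ∃ x ∈ A, ∀ y ∈ A, x ≤ y then h.choose else ⊤

variable {S : Type*}

/-- A state profile `Ω : Fin h → S × S` is valid if there are `m ≥ 2` states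
`s 0, …, s m` with `s 0 = s 1 = off`, `s (m-1) = s m = off`, such that
`{0, …, h-1}` is the concatenation of consecutive blocks `I_1, …, I_m`
(delimited by the cumulative endpoints `e 0 = 0 ≤ e 1 ≤ ⋯ ≤ e m = h`) where the
`k`-th block has size `T (s (k-1)) (s k)` (in particular this transition time is
not `∞`) and `Ω i = (s (k-1), s k)` for every `i` in the `k`-th block. -/
def ValidProfile (off : S) (T : S → S → ℕ∞) {h : ℕ} (Ω : Fin h → S × S) : Prop :=
  ∃ (m : ℕ) (s : ℕ → S) (e : ℕ → ℕ),
    2 ≤ m ∧ s 0 = off ∧ s 1 = off ∧ s (m - 1) = off ∧ s m = off ∧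
    e 0 = 0 ∧ e m = h ∧
    ∀ k, 1 ≤ k → k ≤ m →
      e (k - 1) ≤ e k ∧
      T (s (k - 1)) (s k) = ((e k - e (k - 1) : ℕ) : ℕ∞) ∧
      ∀ i : Fin h, e (k - 1) ≤ (i : ℕ) → (i : ℕ) < e k → Ω i = (s (k - 1), s k)

/-- A solution `(σ, Ω)` of the job list `p` is feasible if `Ω` is a valid state
profile, every processing window `[σ j, σ j + p j)` is contained in `{0, …, h-1}`,
the processing windows are pairwise disjoint, and `Ω i = (proc, proc)` for every
interval `i` lying in some processing window. -/
def Feasible (off proc : S) (T : S → S → ℕ∞) {h n : ℕ}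
    (p : Fin n → ℕ) (σ : Fin n → ℕ) (Ω : Fin h → S × S) : Prop :=
  ValidProfile off T Ω ∧
  (∀ j, σ j + p j ≤ h) ∧
  (∀ j j' : Fin n, j ≠ j' → ∀ i : ℕ,
    ¬(σ j ≤ i ∧ i < σ j + p j ∧ σ j' ≤ i ∧ i < σ j' + p j')) ∧
  (∀ j : Fin n, ∀ i : Fin h, σ j ≤ (i : ℕ) → (i : ℕ) < σ j + p j → Ω i = (proc, proc))

/-- The total energy cost of a solution: `TEC(σ, Ω) = Σ_{i<h} c i • P (Ω i)`. -/
def TEC (P : S → S → ℚ) {h : ℕ} (c : Fin h → ℚ) (Ω : Fin h → S × S) : ℚ :=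
  ∑ i, c i * P (Ω i).1 (Ω i).2

/-- A permutation `π` of `Fin n` orders `(σ, Ω)` if
`σ (π ℓ) + p (π ℓ) ≤ σ (π (ℓ+1))` for all `ℓ < n - 1`. -/
def Orders {n : ℕ} (p : Fin n → ℕ) (σ : Fin n → ℕ) (π : Equiv.Perm (Fin n)) : Prop :=
  ∀ (ℓ : ℕ) (h1 : ℓ + 1 < n),
    σ (π ⟨ℓ, by omega⟩) + p (π ⟨ℓ, by omega⟩) ≤ σ (π ⟨ℓ + 1, h1⟩)

/-- `TEC*(p, π)`: the optimal total energy cost over feasible solutions of `p`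
ordered by `π` (`⊤` if none exists). -/
noncomputable def TECopt (off proc : S) (T : S → S → ℕ∞) (P : S → S → ℚ)
    {h n : ℕ} (c : Fin h → ℚ) (p : Fin n → ℕ) (π : Equiv.Perm (Fin n)) : WithTop ℚ :=
  infQ {x : ℚ | ∃ (σ : Fin n → ℕ) (Ω : Fin h → S × S),
    Feasible off proc T p σ Ω ∧ Orders p σ π ∧ x = TEC P c Ω}

/-- The optimal total energy cost over all feasible solutions of `p`
(with no prescribed order of the jobs). -/
noncomputable def TECglobal (off proc : S) (T : S → S → ℕ∞) (P : S → S → ℚ)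
    {h n : ℕ} (c : Fin h → ℚ) (p : Fin n → ℕ) : WithTop ℚ :=
  infQ {x : ℚ | ∃ (σ : Fin n → ℕ) (Ω : Fin h → S × S),
    Feasible off proc T p σ Ω ∧ x = TEC P c Ω}

/-- The jobs not fixed by the prefix `ρ`, i.e. those outside the range of `ρ`. -/
def unfixed {n k : ℕ} (ρ : Fin k → Fin n) : Finset (Fin n) :=
  Finset.univ.filter fun j => ∀ ℓ, ρ ℓ ≠ j

/-- The number of jobs of the `d`-relaxation of `(p, ρ)`:
`k + (Σ_{j ∉ range ρ} p j) / d`. -/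
def relaxLen {n k : ℕ} (p : Fin n → ℕ) (ρ : Fin k → Fin n) (d : ℕ) : ℕ :=
  k + (∑ j ∈ unfixed ρ, p j) / d

/-- The `d`-relaxation of `(p, ρ)`: the fixed jobs `p (ρ 0), …, p (ρ (k-1))`
followed by `(Σ_{j ∉ range ρ} p j) / d` jobs of processing time `d`. -/
def relax {n k : ℕ} (p : Fin n → ℕ) (ρ : Fin k → Fin n) (d : ℕ) :
    Fin (relaxLen p ρ d) → ℕ :=
  fun ℓ => if hl : (ℓ : ℕ) < k then p (ρ ⟨ℓ, hl⟩) else d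

/-- The greatest common divisor of the processing times of the unfixed jobs. -/
def gcdUnfixed {n k : ℕ} (p : Fin n → ℕ) (ρ : Fin k → Fin n) : ℕ :=
  (unfixed ρ).gcd p

/-- The optimal switching cost `κ(s, a, s', b)`: the infimum over all chains
`s = u 0, u 1, …, u r = s'` with `T (u (t-1)) (u t) ≠ ∞` for every `t` and
`Σ_t T (u (t-1)) (u t) = b - a` of the total energy cost of the corresponding
consecutive blocks filling `{a, …, b-1}`. -/
noncomputable def kappa (T : S → S → ℕ∞) (P : S → S → ℚ) {h : ℕ} (c : Fin h → ℚ)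
    (s : S) (a : ℕ) (s' : S) (b : ℕ) : WithTop ℚ :=
  infQ {x : ℚ | ∃ (r : ℕ) (u : ℕ → S) (e : ℕ → ℕ),
    u 0 = s ∧ u r = s' ∧ e 0 = a ∧ e r = b ∧
    (∀ t, 1 ≤ t → t ≤ r → e (t - 1) ≤ e t ∧
      T (u (t - 1)) (u t) = ((e t - e (t - 1) : ℕ) : ℕ∞)) ∧
    x = ∑ t ∈ Finset.Icc 1 r, ∑ i ∈ Finset.Ico (e (t - 1)) (e t),
          (if hi : i < h then c ⟨i, hi⟩ else 0) * P (u (t - 1)) (u t)}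

/-- `d(s, s')`: the minimal total duration `Σ_t T (u (t-1)) (u t)` over chains
`s = u 0, …, u r = s'` with `r ≥ 1` and all transition times finite. -/
noncomputable def minDur (T : S → S → ℕ∞) (s s' : S) : ℕ∞ :=
  sInf {x : ℕ∞ | ∃ (r : ℕ) (u : ℕ → S), 1 ≤ r ∧ u 0 = s ∧ u r = s' ∧
    (∀ t, 1 ≤ t → t ≤ r → T (u (t - 1)) (u t) ≠ ⊤) ∧
    x = ∑ t ∈ Finset.Icc 1 r, T (u (t - 1)) (u t)}

/-- `(a, b)` (as half-open intervals `[a k, b k)`, `k : Fin K`) enumerates the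
maximal blocks of consecutive intervals `i` with `Ω i = (proc, proc)`:
every block is nonempty, consists of processing intervals only, every processing
interval lies in some block, and the (sorted) blocks are strictly separated. -/
def IsMaxProcBlocks (proc : S) {h : ℕ} (Ω : Fin h → S × S) {K : ℕ}
    (a b : Fin K → ℕ) : Prop :=
  (∀ k, a k < b k ∧ b k ≤ h) ∧
  (∀ k, ∀ i : Fin h, a k ≤ (i : ℕ) → (i : ℕ) < b k → Ω i = (proc, proc)) ∧
  (∀ i : Fin h, Ω i = (proc, proc) → ∃ k, a k ≤ (i : ℕ) ∧ (i : ℕ) < b k) ∧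
  (∀ k k' : Fin K, k < k' → b k < a k')

section KappaAux

variable {S : Type*}

lemma infQ_top_or_mem (A : Set ℚ) :
    infQ A = ⊤ ∨ ∃ x ∈ A, infQ A = ((x : ℚ) : WithTop ℚ) := by
  unfold infQ
  split
  · next hex => exact Or.inr ⟨hex.choose, hex.choose_spec.1, rfl⟩
  · exact Or.inl rfl

lemma infQ_le {A : Set ℚ} (hA : A.Finite) {x : ℚ} (hx : x ∈ A) :
    infQ A ≤ (x : WithTop ℚ) := by
  have hex : ∃ m ∈ A, ∀ y ∈ A, m ≤ y := by
    obtain ⟨m, hm, hmin⟩ := Set.exists_min_image A id hA ⟨x, hx⟩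
    exact ⟨m, hm, hmin⟩
  rw [infQ, dif_pos hex]
  exact_mod_cast hex.choose_spec.2 x hx

lemma e_mono {r : ℕ} {e : ℕ → ℕ}
    (he : ∀ t, 1 ≤ t → t ≤ r → e (t - 1) ≤ e t) :
    ∀ i j, i ≤ j → j ≤ r → e i ≤ e j := by
  intro i j hij hjr
  induction j with
  | zero => have : i = 0 := by omega
            simp [this]
  | succ n ih =>
    rcases Nat.lt_or_ge i (n + 1) with hi | hi
    · have h1 : e i ≤ e n := ih (by omega) (by omega)
      have h2 := he (n + 1) (by omega) hjr
      simpa using h1.trans (by simpa using h2)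
    · have : i = n + 1 := by omega
      simp [this]

lemma sum_Icc_shift (f : ℕ → ℚ) (r : ℕ) :
    ∑ t ∈ Finset.Icc 1 (r + 1), f t = f 1 + ∑ t ∈ Finset.Icc 1 r, f (t + 1) := by
  induction r with
  | zero => simp
  | succ n ih =>
    rw [Finset.sum_Icc_succ_top (by omega), ih,
        Finset.sum_Icc_succ_top (show 1 ≤ n + 1 by omega)]
    ring

variable {S : Type*}

lemma repr_sum (P : S → S → ℚ) {h : ℕ} (c : Fin h → ℚ) :
    ∀ (r : ℕ) (u : ℕ → S) (e : ℕ → ℕ),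
      (∀ t, 1 ≤ t → t ≤ r → e (t - 1) ≤ e t) →
      ∃ g : ℕ → S × S,
        ∑ t ∈ Finset.Icc 1 r, ∑ i ∈ Finset.Ico (e (t - 1)) (e t),
            (if hi : i < h then c ⟨i, hi⟩ else 0) * P (u (t - 1)) (u t)
          = ∑ i ∈ Finset.Ico (e 0) (e r),
              (if hi : i < h then c ⟨i, hi⟩ else 0) * P (g i).1 (g i).2 := by
  intro r
  induction r with
  | zero => intro u e _; exact ⟨fun _ => (u 0, u 0), by simp⟩
  | succ n ih =>
    intro u e he
    obtain ⟨g, hg⟩ := ih u e (fun t h1 h2 => he t h1 (by omega))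
    refine ⟨fun i => if i < e n then g i else (u n, u (n + 1)), ?_⟩
    have h0n : e 0 ≤ e n :=
      e_mono (fun t h1 h2 => he t h1 (by omega)) 0 n (by omega) le_rfl
    have hnn : e n ≤ e (n + 1) := by simpa using he (n + 1) (by omega) le_rfl
    rw [Finset.sum_Icc_succ_top (by omega), hg,
        ← Finset.sum_Ico_consecutive _ h0n hnn]
    simp only [Nat.add_sub_cancel]
    congr 1
    · refine Finset.sum_congr rfl fun i hi => ?_
      rw [Finset.mem_Ico] at hi
      simp [hi.2]
    · refine Finset.sum_congr rfl fun i hi => ?_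
      rw [Finset.mem_Ico] at hi
      simp [Nat.not_lt.mpr hi.1]

def ASet (T : S → S → ℕ∞) (P : S → S → ℚ) {h : ℕ} (c : Fin h → ℚ)
    (s' : S) (b : ℕ) (q : S) (a0 : ℕ) : Set ℚ :=
  {x : ℚ | ∃ (r : ℕ) (u : ℕ → S) (e : ℕ → ℕ),
    u 0 = q ∧ u r = s' ∧ e 0 = a0 ∧ e r = b ∧
    (∀ t, 1 ≤ t → t ≤ r → e (t - 1) ≤ e t ∧
      T (u (t - 1)) (u t) = ((e t - e (t - 1) : ℕ) : ℕ∞)) ∧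
    x = ∑ t ∈ Finset.Icc 1 r, ∑ i ∈ Finset.Ico (e (t - 1)) (e t),
          (if hi : i < h then c ⟨i, hi⟩ else 0) * P (u (t - 1)) (u t)}

lemma ASet_finite [Fintype S] (T : S → S → ℕ∞) (P : S → S → ℚ) {h : ℕ}
    (c : Fin h → ℚ) (s' : S) (b : ℕ) (q : S) (a0 : ℕ) :
    (ASet T P c s' b q a0).Finite := by
  classical
  have hsub : ASet T P c s' b q a0 ⊆
      Set.range (fun G : Fin b → S × S =>
        ∑ i ∈ Finset.range b, if a0 ≤ i then
          (if hi : i < h then c ⟨i, hi⟩ else 0) *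
            (if hb : i < b then P (G ⟨i, hb⟩).1 (G ⟨i, hb⟩).2 else 0) else 0) := by
    rintro x ⟨r, u, e, hu0, hur, he0, her, hcond, rfl⟩
    obtain ⟨g, hg⟩ := repr_sum P c r u e (fun t h1 h2 => (hcond t h1 h2).1)
    refine ⟨fun i => g (i : ℕ), ?_⟩
    rw [hg, he0, her] at *
    have : Finset.Ico a0 b = (Finset.range b).filter (fun i => a0 ≤ i) := by
      ext i; simp [Finset.mem_Ico, Finset.mem_filter]; omega
    rw [this, Finset.sum_filter]
    refine Finset.sum_congr rfl fun i hi => ?_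
    rw [Finset.mem_range] at hi
    split
    · simp [hi]
    · rfl
  exact (Set.finite_range _).subset hsub

lemma kappa_eq (T : S → S → ℕ∞) (P : S → S → ℚ) {h : ℕ} (c : Fin h → ℚ)
    (s : S) (a : ℕ) (s' : S) (b : ℕ) :
    kappa T P c s a s' b = infQ (ASet T P c s' b s a) := rfl


end KappaAux

open Classical in
/-- the dynamic-programming recurrence for the optimal switching
cost `κ`, where the minimum over an empty set of intermediate states is `⊤`. -/
theorem kappa_recurrence {S : Type*} [Fintype S] (off proc : S)
    (T : S → S → ℕ∞) (hT : ∀ s : S, T s s = 1)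
    (P : S → S → ℚ) {h : ℕ} (hh : 2 ≤ h) (c : Fin h → ℚ)
    (s s' : S) (a b : ℕ) (hab : a < b) (hbh : b ≤ h) :
    kappa T P c s a s' b =
      Finset.univ.inf (fun s'' : S =>
        if T s s'' ≠ ⊤ ∧ T s s'' ≤ ((b - a : ℕ) : ℕ∞) then
          ((∑ i ∈ Finset.Ico a (a + (T s s'').toNat),
              (if hi : i < h then c ⟨i, hi⟩ else 0) * P s s'' : ℚ) : WithTop ℚ)
            + kappa T P c s'' (a + (T s s'').toNat) s' b
        else ⊤) := by
  apply le_antisymm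
  · -- LHS ≤ each term
    refine Finset.le_inf fun s'' _ => ?_
    by_cases hcond : T s s'' ≠ ⊤ ∧ T s s'' ≤ ((b - a : ℕ) : ℕ∞)
    · rw [if_pos hcond]
      set t := (T s s'').toNat with htdef
      have ht : T s s'' = (t : ℕ∞) := (ENat.coe_toNat hcond.1).symm
      rw [kappa_eq, kappa_eq]
      rcases infQ_top_or_mem (ASet T P c s' b s'' (a + t)) with htop | ⟨x₂, hx₂, heq⟩
      · rw [htop, add_top]
        exact le_top
      · rw [heq, ← WithTop.coe_add]
        refine infQ_le (ASet_finite T P c s' b s a) ?_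
        obtain ⟨r, u, e, hu0, hur, he0, her, hc2, hsum⟩ := hx₂
        refine ⟨r + 1, fun k => if k = 0 then s else u (k - 1),
          fun k => if k = 0 then a else e (k - 1), by simp, by simp [hur],
          by simp, by simp [her], ?_, ?_⟩
        · intro t' h1 h2
          rcases Nat.lt_or_ge t' 2 with h' | h'
          · have ht1 : t' = 1 := by omega
            subst ht1
            show a ≤ e 0 ∧ T s (u 0) = ((e 0 - a : ℕ) : ℕ∞)
            rw [hu0, he0, ht]
            exact ⟨by omega, by congr 1; omega⟩
          · obtain ⟨k, rfl⟩ : ∃ k, t' = k + 2 := ⟨t' - 2, by omega⟩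
            show e k ≤ e (k + 1) ∧
              T (u k) (u (k + 1)) = ((e (k + 1) - e k : ℕ) : ℕ∞)
            simpa using hc2 (k + 1) (by omega) (by omega)
        · rw [sum_Icc_shift]
          congr 1
          · show _ = (∑ i ∈ Finset.Ico a (e 0),
                (if hi : i < h then c ⟨i, hi⟩ else 0) * P s (u 0))
            rw [hu0, he0]
          · rw [hsum]
            refine Finset.sum_congr rfl fun t' ht' => ?_
            rw [Finset.mem_Icc] at ht'
            obtain ⟨k, rfl⟩ : ∃ k, t' = k + 1 := ⟨t' - 1, by omega⟩
            rfl
    · rw [if_neg hcond]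
      exact le_top
  · -- RHS ≤ LHS
    rw [kappa_eq]
    rcases infQ_top_or_mem (ASet T P c s' b s a) with htop | ⟨x₁, hx₁, heq⟩
    · rw [htop]; exact le_top
    obtain ⟨r, u, e, hu0, hur, he0, her, hc2, hsum⟩ := hx₁
    obtain ⟨r₀, rfl⟩ : ∃ r₀, r = r₀ + 1 := by
      rcases r with _ | r₀
      · exfalso
        rw [← he0, her] at hab
        exact lt_irrefl _ hab
      · exact ⟨r₀, rfl⟩
    have hmono := e_mono (fun t h1 h2 => (hc2 t h1 h2).1)
    have hT1 := (hc2 1 le_rfl (by omega)).2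
    rw [hu0] at hT1
    have he01 : a ≤ e 1 := by
      have := (hc2 1 le_rfl (by omega)).1
      rwa [he0] at this
    have he1b : e 1 ≤ b := by
      have := hmono 1 (r₀ + 1) (by omega) le_rfl
      rwa [her] at this
    have hT1' : T s (u 1) = ((e 1 - a : ℕ) : ℕ∞) := by
      rw [hT1, he0]
    have hcond' : T s (u 1) ≠ ⊤ ∧ T s (u 1) ≤ ((b - a : ℕ) : ℕ∞) := by
      constructor
      · rw [hT1']; exact ENat.coe_ne_top _
      · rw [hT1']
        exact_mod_cast (by omega : e 1 - a ≤ b - a)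
    have htoNat : (T s (u 1)).toNat = e 1 - a := by
      rw [hT1']; exact ENat.toNat_coe _
    have hat : a + (T s (u 1)).toNat = e 1 := by
      rw [htoNat]; omega
    refine le_trans (Finset.inf_le (Finset.mem_univ (u 1))) ?_
    rw [if_pos hcond']
    set x₂ : ℚ := ∑ t' ∈ Finset.Icc 1 r₀, ∑ i ∈ Finset.Ico (e t') (e (t' + 1)),
        (if hi : i < h then c ⟨i, hi⟩ else 0) * P (u t') (u (t' + 1)) with hx₂def
    have hx2mem : x₂ ∈ ASet T P c s' b (u 1) (a + (T s (u 1)).toNat) := by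
      refine ⟨r₀, fun k => u (k + 1), fun k => e (k + 1), rfl, hur,
        by show e 1 = _; rw [hat], her, ?_, ?_⟩
      · intro t' h1 h2
        obtain ⟨k, rfl⟩ : ∃ k, t' = k + 1 := ⟨t' - 1, by omega⟩
        show e (k + 1) ≤ e (k + 2) ∧
          T (u (k + 1)) (u (k + 2)) = ((e (k + 2) - e (k + 1) : ℕ) : ℕ∞)
        simpa using hc2 (k + 2) (by omega) (by omega)
      · rw [hx₂def]
        refine Finset.sum_congr rfl fun t' ht' => ?_
        rw [Finset.mem_Icc] at ht'
        obtain ⟨k, rfl⟩ : ∃ k, t' = k + 1 := ⟨t' - 1, by omega⟩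
        rfl
    have hk2 : kappa T P c (u 1) (a + (T s (u 1)).toNat) s' b ≤ (x₂ : WithTop ℚ) := by
      rw [kappa_eq]
      exact infQ_le (ASet_finite T P c s' b (u 1) (a + (T s (u 1)).toNat)) hx2mem
    have hx1 : x₁ = (∑ i ∈ Finset.Ico a (a + (T s (u 1)).toNat),
        (if hi : i < h then c ⟨i, hi⟩ else 0) * P s (u 1)) + x₂ := by
      rw [hsum, sum_Icc_shift]
      congr 1
      · show (∑ i ∈ Finset.Ico (e 0) (e 1),
            (if hi : i < h then c ⟨i, hi⟩ else 0) * P (u 0) (u 1)) = _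
        rw [hu0, he0, hat]
    rw [heq, hx1, WithTop.coe_add]
    exact add_le_add (le_refl _) hk2


end TOU
end

section
/- Suppose all jobs have equal processing time, i.e., p j = p j' for all j, j' ∈ Fin n. Then for every permutation π of Fin n, TEC*(p, π) equals the infimum of TEC(σ, Ω) over all feasible solutions (σ, Ω) of p; that is, for fully interchangeable jobs any fixed sequence is globally optimal. -/
namespace TOU

variable {S : Type*}

/-- for fully interchangeable jobs, any fixed sequence is globally
optimal. -/
theorem equal_jobs_any_sequence_optimal {S : Type*} [Fintype S] (off proc : S)
    (T : S → S → ℕ∞) (hT : ∀ s : S, T s s = 1)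
    (P : S → S → ℚ) {h : ℕ} (hh : 2 ≤ h) (c : Fin h → ℚ)
    {n : ℕ} (p : Fin n → ℕ) (hp : ∀ j, 1 ≤ p j)
    (heq : ∀ j j' : Fin n, p j = p j') (π : Equiv.Perm (Fin n)) :
    TECopt off proc T P c p π = TECglobal off proc T P c p := by
  have hset : {x : ℚ | ∃ (σ : Fin n → ℕ) (Ω : Fin h → S × S),
        Feasible off proc T p σ Ω ∧ Orders p σ π ∧ x = TEC P c Ω}
      = {x : ℚ | ∃ (σ : Fin n → ℕ) (Ω : Fin h → S × S),
        Feasible off proc T p σ Ω ∧ x = TEC P c Ω} := by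
    ext x
    constructor
    · rintro ⟨σ, Ω, hfeas, _, hx⟩
      exact ⟨σ, Ω, hfeas, hx⟩
    · rintro ⟨σ, Ω, hfeas, hx⟩
      obtain ⟨hval, hbd, hdisj, hproc⟩ := hfeas
      -- σ is injective
      have hσinj : Function.Injective σ := by
        intro j j' hjj
        by_contra hne
        exact hdisj j j' hne (σ j)
          ⟨le_refl _, by have := hp j; omega, hjj.ge, by have := hp j'; omega⟩
      set τ : Equiv.Perm (Fin n) := Tuple.sort σ with hτ
      have hmono : Monotone (σ ∘ τ) := Tuple.monotone_sort σ
      have hsm : StrictMono (σ ∘ τ) :=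
        hmono.strictMono_of_injective (hσinj.comp τ.injective)
      set e : Equiv.Perm (Fin n) := π.symm.trans τ with he
      refine ⟨fun j => σ (e j), Ω, ⟨hval, ?_, ?_, ?_⟩, ?_, hx⟩
      · intro j
        rw [heq j (e j)]
        exact hbd (e j)
      · intro j j' hne i hi
        refine hdisj (e j) (e j') (fun hc => hne (e.injective hc)) i ?_
        rw [heq (e j) j, heq (e j') j']
        exact hi
      · intro j i h1 h2
        refine hproc (e j) i h1 ?_
        rw [heq (e j) j]
        exact h2
      · intro ℓ h1
        have hes : ∀ m : Fin n, e (π m) = τ m := by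
          intro m
          simp [he, Equiv.trans_apply]
        simp only [hes]
        set a : Fin n := ⟨ℓ, by omega⟩
        set b : Fin n := ⟨ℓ + 1, h1⟩
        have hab : a < b := by simp [a, b, Fin.lt_def]
        have hlt : σ (τ a) < σ (τ b) := hsm hab
        by_contra hcon
        push_neg at hcon
        have hne : τ a ≠ τ b := fun hc => by
          have := τ.injective hc
          simp [a, b, Fin.ext_iff] at this
        refine hdisj (τ a) (τ b) hne (σ (τ b))
          ⟨hlt.le, ?_, le_refl _, by have := hp (τ b); omega⟩
        rw [heq (τ a) (π a)]
        exact hcon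
  unfold TECopt TECglobal
  rw [hset]

end TOU
end
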